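/- Let k be a field of characteristic p > 2, let λ, μ ∈ k, let G = ℤ/nℤ with p | n and generator g, and let H be the quotient of T(V) # kG (with a·g = a, b·g = a+b, a and b (g,1)-skew-primitive) by the ideal Ĩ generated by a^p - λ(1 - g^p), b^p - μ(1 - g^p), and ba - ab - (1/2)a². Then Ĩ is a bi-ideal: Δ(Ĩ) ⊆ Ĩ⊗H + H⊗Ĩ and ε(Ĩ) = 0. -/

import Mathlib

noncomputable section

open TensorProduct

variable (k : Type*) [Field k]

def gF : FreeAlgebra k (Fin 3) := FreeAlgebra.ι k 0

def aF : FreeAlgebra k (Fin 3) := FreeAlgebra.ι k 1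

def bF : FreeAlgebra k (Fin 3) := FreeAlgebra.ι k 2

/-- Relations of the smash product `T(V) # kG`, where `V = span(a,b)` with
`a·g = a`, `b·g = a + b`: namely `g^n = 1`, `ag = ga`, `bg = ga + gb`. -/
def relH (n : ℕ) : FreeAlgebra k (Fin 3) → FreeAlgebra k (Fin 3) → Prop :=
  fun x y =>
    (x = (gF k) ^ n ∧ y = 1) ∨
    (x = aF k * gF k ∧ y = gF k * aF k) ∨
    (x = bF k * gF k ∧ y = gF k * aF k + gF k * bF k)

/-- The smash product algebra `H₀ = T(V) # kG`. -/
abbrev H (n : ℕ) := RingQuot (relH k n)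

def gH (n : ℕ) : H k n := RingQuot.mkAlgHom k (relH k n) (gF k)

def aH (n : ℕ) : H k n := RingQuot.mkAlgHom k (relH k n) (aF k)

def bH (n : ℕ) : H k n := RingQuot.mkAlgHom k (relH k n) (bF k)

/-!
Write `Ā = H₀ ⧸ Ĩ`. By right exactness of `⊗`, the kernel of `H₀ ⊗ H₀ → Ā ⊗ Ā` is
`Ĩ ⊗ H₀ + H₀ ⊗ Ĩ`, so it suffices that the algebra map `H₀ → Ā ⊗ Ā` induced by `Δ` kills the
three generators of `Ĩ`; this is a computation with `A = a ⊗ 1 + g ⊗ a` and `B = b ⊗ 1 + g ⊗ b`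
in `Ā ⊗ Ā`.

The summands of `A` commute, so `A ^ p = a ^ p ⊗ 1 + g ^ p ⊗ a ^ p`. Those of `B`, `u = b ⊗ 1` and
`v = g ⊗ b`, do not, but `ad_u^m v = ∏_{j<m} (1 + j/2) • g a^m ⊗ b` all commute with `v`, and the
factor `j = p - 2` kills `ad_u^(p-1) v`. Under these two conditions `(u + v) ^ p = u ^ p + v ^ p`:
with `Z = u + X v`, the `X`-derivative of `Z ^ p` is `∑ Zⁱ v Z^(p-1-i)`, which in characteristic
`p` equals `ad_Z^(p-1) v = ad_u^(p-1) v = 0`, so all middle coefficients of `Z ^ p` vanish.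
-/

open Polynomial

section CharP

variable (K : Type*) [CommRing K] (p : ℕ) [Fact p.Prime] [CharP K p]

theorem cast_choose_pred_eq_neg_one_pow {i : ℕ} (hi : i < p) :
    ((p - 1).choose i : K) = (-1) ^ i := by
  induction i with
  | zero => simp
  | succ i ih =>
    have hpascal : ((p - 1).choose i : K) + (p - 1).choose (i + 1) = 0 := by
      rw [← Nat.cast_add, ← Nat.choose_succ_succ', Nat.sub_add_cancel (Fact.out : p.Prime).pos,
        CharP.cast_eq_zero_iff K p]
      exact (Fact.out : p.Prime).dvd_choose_self i.succ_ne_zero hi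
    rw [ih (by omega)] at hpascal
    rw [pow_succ]
    linear_combination hpascal

theorem neg_one_pow_char_pred : (-1 : K) ^ (p - 1) = 1 := by
  have h := neg_one_pow_char K p
  rw [← Nat.sub_add_cancel (Fact.out : p.Prime).pos, pow_succ] at h
  simpa using h

theorem Commute.sub_pow_pred_eq_sum {S : Type*} [Ring S] [Algebra K S] {x y : S}
    (h : Commute x y) :
    (x - y) ^ (p - 1) = ∑ i ∈ Finset.range p, x ^ i * y ^ (p - 1 - i) := by
  rw [sub_eq_add_neg, h.neg_right.add_pow, Nat.sub_add_cancel (Fact.out : p.Prime).pos]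
  refine Finset.sum_congr rfl fun i hi => ?_
  have hi := Finset.mem_range.1 hi
  have hsign : ((-1 : S) ^ (p - 1 - i) * ((p - 1).choose i : S)) = 1 := by
    rw [← map_natCast (algebraMap K S), cast_choose_pred_eq_neg_one_pow K p hi,
      ← map_one (algebraMap K S), ← map_neg, ← map_pow, ← map_mul, ← pow_add,
      Nat.sub_add_cancel (by omega), neg_one_pow_char_pred, map_one]
  rw [neg_pow, mul_assoc, mul_assoc, ← (Nat.cast_commute _ _).eq, ← mul_assoc ((-1) ^ _), hsign,
    one_mul]

theorem sum_pow_mul_mul_pow_eq_iterate_lie {S : Type*} [Ring S] [Algebra K S] (z w : S) :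
    ∑ i ∈ Finset.range p, z ^ i * w * z ^ (p - 1 - i) = (⁅z, ·⁆)^[p - 1] w := by
  have had : (⁅z, ·⁆ : S → S) = ⇑(LinearMap.mulLeft K z - LinearMap.mulRight K z) := by
    ext; simp [Ring.lie_def]
  rw [had, ← Module.End.coe_pow, (LinearMap.commute_mulLeft_right z z).sub_pow_pred_eq_sum K p,
    LinearMap.sum_apply]
  simp [LinearMap.pow_mulLeft, LinearMap.pow_mulRight, mul_assoc]

end CharP

theorem Polynomial.derivative_pow_eq_sum {R : Type*} [Semiring R] (f : R[X]) (n : ℕ) :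
    derivative (f ^ n) = ∑ i ∈ Finset.range n, f ^ i * derivative f * f ^ (n - 1 - i) := by
  induction n with
  | zero => simp
  | succ n ih =>
    rw [pow_succ, derivative_mul, ih, Finset.sum_mul, Finset.sum_range_succ, add_tsub_cancel_right,
      Nat.sub_self, pow_zero, mul_one]
    congr 1
    refine Finset.sum_congr rfl fun i hi => ?_
    rw [mul_assoc, ← pow_succ, show n - 1 - i + 1 = n - i by have := Finset.mem_range.1 hi; omega]

theorem Polynomial.coeff_eq_zero_of_derivative_eq_zero (K : Type*) [Field K] (p : ℕ) [CharP K p]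
    {Q : Type*} [Ring Q] [Algebra K Q] {f : Q[X]} (hf : derivative f = 0)
    {i : ℕ} (hi : 0 < i) (hip : i < p) : f.coeff i = 0 := by
  have hunit : IsUnit (i : Q) := by
    rw [← map_natCast (algebraMap K Q)]
    refine (IsUnit.mk0 _ ?_).map _
    rw [Ne, CharP.cast_eq_zero_iff K p]
    exact fun h => (Nat.le_of_dvd hi h).not_gt hip
  have h := congrArg (coeff · (i - 1)) hf
  simp only [coeff_derivative, coeff_zero, Nat.sub_add_cancel hi] at h
  rw [← Nat.cast_succ, Nat.succ_eq_add_one, Nat.sub_add_cancel hi] at h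
  exact hunit.mul_left_eq_zero.1 h

theorem Polynomial.eval_one_eq_coeff_zero_add_coeff_of_derivative_eq_zero (K : Type*) [Field K]
    (p : ℕ) [Fact p.Prime] [CharP K p] {Q : Type*} [Ring Q] [Algebra K Q] {f : Q[X]}
    (hf : derivative f = 0) (hdeg : f.natDegree ≤ p) :
    f.eval 1 = f.coeff 0 + f.coeff p := by
  rw [eval_eq_sum_range' (Nat.lt_succ_of_le hdeg), Finset.sum_range_succ,
    Finset.sum_eq_single_of_mem 0 (Finset.mem_range.2 (Fact.out : p.Prime).pos)]
  · simp
  · intro i hi hi0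
    rw [coeff_eq_zero_of_derivative_eq_zero K p hf (Nat.pos_of_ne_zero hi0)
      (Finset.mem_range.1 hi), zero_mul]

section Jacobson

variable (K : Type*) [Field K] (p : ℕ) [Fact p.Prime] [CharP K p]

theorem add_pow_char_of_iterate_lie_eq_zero {Q : Type*} [Ring Q] [Algebra K Q] {u v : Q}
    (hcomm : ∀ m, Commute v ((⁅u, ·⁆)^[m] v)) (hnil : (⁅u, ·⁆)^[p - 1] v = 0) :
    (u + v) ^ p = u ^ p + v ^ p := by
  set Z : Q[X] := C u + C v * X
  have hlie_C : ∀ w, Commute v w → ⁅Z, C w⁆ = C ⁅u, w⁆ := by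
    intro w hw
    rw [Ring.lie_def, Ring.lie_def, add_mul, mul_add, mul_assoc, X_mul, ← mul_assoc, ← mul_assoc,
      ← C_mul, ← C_mul, ← C_mul, ← C_mul, hw.eq, C_sub]
    abel
  have hlie : ∀ m, (⁅Z, ·⁆)^[m] (C v) = C ((⁅u, ·⁆)^[m] v) := by
    intro m
    induction m with
    | zero => rfl
    | succ m ih =>
      rw [Function.iterate_succ_apply', Function.iterate_succ_apply', ih, hlie_C _ (hcomm m)]
  have hder : derivative (Z ^ p) = 0 := by
    rw [derivative_pow_eq_sum, show derivative Z = C v by simp [Z],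
      sum_pow_mul_mul_pow_eq_iterate_lie K p, hlie, hnil, C_0]
  have hdeg : Z.natDegree ≤ 1 := by
    simpa [Z] using natDegree_linear_le (a := v) (b := u)
  let ev : Q[X] →+* Q := eval₂RingHom' (RingHom.id Q) 1 fun _ => Commute.one_right _
  calc (u + v) ^ p = ev (Z ^ p) := by rw [map_pow, show ev Z = u + v by simp [ev, Z]]
    _ = (Z ^ p).eval 1 := rfl
    _ = (Z ^ p).coeff 0 + (Z ^ p).coeff p :=
        eval_one_eq_coeff_zero_add_coeff_of_derivative_eq_zero K p hder
          (natDegree_pow_le_of_le p hdeg |>.trans_eq (mul_one p))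
    _ = u ^ p + v ^ p := by
        rw [← constantCoeff_apply, map_pow, constantCoeff_apply]
        simpa [Z] using coeff_pow_of_natDegree_le (m := p) hdeg

theorem Algebra.add_pow_char_of_commute {Q : Type*} [Ring Q] [Algebra K Q] {u v : Q}
    (h : Commute u v) : (u + v) ^ p = u ^ p + v ^ p := by
  have hlie : ∀ m, (⁅u, ·⁆)^[m + 1] v = 0 := fun m => by
    rw [Function.iterate_succ_apply, show ⁅u, v⁆ = 0 from sub_eq_zero.2 h.eq]
    exact Function.iterate_fixed (by simp [Ring.lie_def]) m
  refine add_pow_char_of_iterate_lie_eq_zero K p (fun m => ?_) ?_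
  · cases m with
    | zero => exact Commute.refl v
    | succ m => rw [hlie]; exact Commute.zero_right v
  · rw [show p - 1 = p - 2 + 1 by have := (Fact.out : p.Prime).two_le; omega, hlie]

end Jacobson

theorem two_ne_zero_of_two_lt_char {K : Type*} [Field K] (p : ℕ) [CharP K p] (hp : 2 < p) :
    (2 : K) ≠ 0 :=
  Ring.two_ne_zero (by rw [ringChar.eq K p]; omega)

section SkewPrimitive

variable {K R : Type*} [Field K] [Ring R] [Algebra K R]

theorem lie_pow_eq_smul_pow_succ {a b : R} {s : K} (h : ⁅b, a⁆ = s • a ^ 2) (m : ℕ) :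
    ⁅b, a ^ m⁆ = ((m : K) * s) • a ^ (m + 1) := by
  induction m with
  | zero => simp [Ring.lie_def]
  | succ m ih =>
    have hleibniz : ⁅b, a ^ m * a⁆ = ⁅b, a ^ m⁆ * a + a ^ m * ⁅b, a⁆ := by
      simp only [Ring.lie_def]; noncomm_ring
    rw [pow_succ, hleibniz, ih, h, smul_mul_assoc, mul_smul_comm, ← pow_succ, ← pow_add]
    push_cast
    module

theorem lie_mul_pow_eq_smul {g a b : R} (hbg : b * g = g * a + g * b)
    (hba : ⁅b, a⁆ = (2 : K)⁻¹ • a ^ 2) (m : ℕ) :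
    ⁅b, g * a ^ m⁆ = (1 + (m : K) * 2⁻¹) • (g * a ^ (m + 1)) := by
  have hleibniz : ⁅b, g * a ^ m⁆ = ⁅b, g⁆ * a ^ m + g * ⁅b, a ^ m⁆ := by
    simp only [Ring.lie_def]; noncomm_ring
  rw [hleibniz, lie_pow_eq_smul_pow_succ hba, Ring.lie_def, hbg, add_sub_cancel_right,
    mul_smul_comm, mul_assoc, ← pow_succ', add_smul, one_smul]

theorem lie_tmul_one_tmul (x y z : R) : ⁅x ⊗ₜ[K] (1 : R), y ⊗ₜ z⁆ = ⁅x, y⁆ ⊗ₜ[K] z := by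
  simp [Ring.lie_def, Algebra.TensorProduct.tmul_mul_tmul, sub_tmul]

theorem iterate_lie_tmul_one {g a b : R} (hbg : b * g = g * a + g * b)
    (hba : ⁅b, a⁆ = (2 : K)⁻¹ • a ^ 2) (m : ℕ) :
    (⁅b ⊗ₜ[K] (1 : R), ·⁆)^[m] (g ⊗ₜ b) =
      (∏ j ∈ Finset.range m, (1 + (j : K) * 2⁻¹)) • ((g * a ^ m) ⊗ₜ[K] b) := by
  induction m with
  | zero => simp
  | succ m ih =>
    rw [Function.iterate_succ_apply', ih, Ring.lie_def, mul_smul_comm, smul_mul_assoc, ← smul_sub,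
      ← Ring.lie_def, lie_tmul_one_tmul, lie_mul_pow_eq_smul hbg hba, ← smul_tmul', smul_smul,
      Finset.prod_range_succ]

theorem tmul_one_add_tmul_pow_char (p : ℕ) [Fact p.Prime] [CharP K p] (hp : 2 < p) {g a b : R}
    (hag : Commute a g) (hbg : b * g = g * a + g * b) (hba : ⁅b, a⁆ = (2 : K)⁻¹ • a ^ 2) :
    (b ⊗ₜ[K] 1 + g ⊗ₜ b) ^ p = (b ^ p) ⊗ₜ 1 + (g ^ p) ⊗ₜ[K] (b ^ p) := by
  have hcomm : ∀ m, Commute (g ⊗ₜ[K] b) ((⁅b ⊗ₜ[K] (1 : R), ·⁆)^[m] (g ⊗ₜ b)) := fun m => by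
    rw [iterate_lie_tmul_one hbg hba]
    exact ((((Commute.refl g).mul_right (hag.symm.pow_right m))).tmul (Commute.refl b)).smul_right _
  have hnil : (⁅b ⊗ₜ[K] (1 : R), ·⁆)^[p - 1] (g ⊗ₜ[K] b) = 0 := by
    rw [iterate_lie_tmul_one hbg hba, Finset.prod_eq_zero (i := p - 2) (by simp; omega), zero_smul]
    -- the factor `1 + (p - 2) / 2` is `p / 2 = 0`
    rw [Nat.cast_sub hp.le, CharP.cast_eq_zero K p, zero_sub, Nat.cast_two, neg_mul,
      mul_inv_cancel₀ (two_ne_zero_of_two_lt_char p hp), add_neg_cancel]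
  rw [add_pow_char_of_iterate_lie_eq_zero K p hcomm hnil, Algebra.TensorProduct.tmul_pow,
    Algebra.TensorProduct.tmul_pow, one_pow]

theorem lie_tmul_one_add_tmul {g a b : R} (h2 : (2 : K) ≠ 0) (hag : Commute a g)
    (hbg : b * g = g * a + g * b) (hba : ⁅b, a⁆ = (2 : K)⁻¹ • a ^ 2) :
    ⁅b ⊗ₜ[K] 1 + g ⊗ₜ b, a ⊗ₜ 1 + g ⊗ₜ a⁆ = (2 : K)⁻¹ • (a ⊗ₜ[K] 1 + g ⊗ₜ a) ^ 2 := by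
  rw [Ring.lie_def, sub_eq_iff_eq_add] at hba
  simp only [Ring.lie_def, add_mul, mul_add, sq, Algebra.TensorProduct.tmul_mul_tmul, mul_one,
    one_mul, hba, hbg, hag.eq]
  simp only [add_tmul, tmul_add, ← smul_tmul', tmul_smul]
  have h2inv : (2 : K)⁻¹ + 2⁻¹ = 1 := by rw [← two_mul, mul_inv_cancel₀ h2]
  linear_combination (norm := module) -h2inv • ((g * a) ⊗ₜ[K] a)

theorem tmul_one_add_tmul_pow_sub_eq_zero (p : ℕ) {g x : R} (c : K)
    (hx : x ^ p - c • (1 - g ^ p) = 0)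
    (hpow : (x ⊗ₜ[K] 1 + g ⊗ₜ x) ^ p = (x ^ p) ⊗ₜ 1 + (g ^ p) ⊗ₜ[K] (x ^ p)) :
    (x ⊗ₜ[K] 1 + g ⊗ₜ x) ^ p - c • (1 - (g ⊗ₜ[K] g) ^ p) = 0 := by
  rw [hpow, sub_eq_zero.1 hx, Algebra.TensorProduct.tmul_pow, Algebra.TensorProduct.one_def]
  simp only [tmul_sub, sub_tmul, ← smul_tmul', tmul_smul]
  module

end SkewPrimitive

section LiftingRelators

variable {K A B : Type*} [Field K] [Ring A] [Algebra K A] [Ring B] [Algebra K B]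
  (p : ℕ) (lam mu : K)

def liftingRelators (g a b : A) : Set A :=
  {a ^ p - lam • (1 - g ^ p), b ^ p - mu • (1 - g ^ p), b * a - a * b - (2 : K)⁻¹ • a ^ 2}

theorem liftingRelators_map (f : A →ₐ[K] B) (g a b : A) :
    liftingRelators p lam mu (f g) (f a) (f b) = f '' liftingRelators p lam mu g a b := by
  simp [liftingRelators, Set.image_insert_eq]

theorem span_liftingRelators_le_ker (f : A →ₐ[K] B) {g a b : A}
    (h : ∀ y ∈ liftingRelators p lam mu (f g) (f a) (f b), y = 0) :
    TwoSidedIdeal.span (liftingRelators p lam mu g a b) ≤ TwoSidedIdeal.ker f := by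
  refine TwoSidedIdeal.span_le.2 fun x hx => (TwoSidedIdeal.mem_ker f).2 (h _ ?_)
  rw [liftingRelators_map]
  exact Set.mem_image_of_mem f hx

theorem liftingRelators_mkₐ_eq_zero {g a b : A} {I : TwoSidedIdeal A}
    (hI : liftingRelators p lam mu g a b ⊆ I) :
    ∀ y ∈ liftingRelators p lam mu (I.ringCon.mkₐ K g) (I.ringCon.mkₐ K a) (I.ringCon.mkₐ K b),
      y = 0 := by
  rw [liftingRelators_map]
  rintro _ ⟨x, hx, rfl⟩
  refine (TwoSidedIdeal.mem_ker I.ringCon.mk').1 ?_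
  rw [TwoSidedIdeal.ker_ringCon_mk']
  exact hI hx

theorem liftingRelators_tmul_eq_zero [Fact p.Prime] [CharP K p] (hp : 2 < p) {g a b : A}
    (hag : Commute a g) (hbg : b * g = g * a + g * b)
    (h : ∀ y ∈ liftingRelators p lam mu g a b, y = 0) :
    ∀ y ∈ liftingRelators p lam mu (g ⊗ₜ[K] g) (a ⊗ₜ 1 + g ⊗ₜ a) (b ⊗ₜ 1 + g ⊗ₜ b), y = 0 := by
  have ha : a ^ p - lam • (1 - g ^ p) = 0 := h _ (Set.mem_insert _ _)
  have hb : b ^ p - mu • (1 - g ^ p) = 0 := h _ (Set.mem_insert_of_mem _ (Set.mem_insert _ _))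
  have hba : ⁅b, a⁆ = (2 : K)⁻¹ • a ^ 2 :=
    sub_eq_zero.1 (h _ (Set.mem_insert_of_mem _ (Set.mem_insert_of_mem _ rfl)))
  rintro y (rfl | rfl | rfl)
  · refine tmul_one_add_tmul_pow_sub_eq_zero p lam ha ?_
    rw [Algebra.add_pow_char_of_commute K p (hag.tmul (Commute.one_left a)),
      Algebra.TensorProduct.tmul_pow, Algebra.TensorProduct.tmul_pow, one_pow]
  · exact tmul_one_add_tmul_pow_sub_eq_zero p mu hb
      (tmul_one_add_tmul_pow_char p hp hag hbg hba)
  · exact sub_eq_zero.2 (lie_tmul_one_add_tmul (two_ne_zero_of_two_lt_char p hp) hag hbg hba)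

end LiftingRelators

theorem mem_span_tmul_of_map_mkₐ_eq_zero {R A : Type*} [CommRing R] [Ring A] [Algebra R A]
    (I : TwoSidedIdeal A) {x : A ⊗[R] A}
    (hx : Algebra.TensorProduct.map (I.ringCon.mkₐ R) (I.ringCon.mkₐ R) x = 0) :
    x ∈ Submodule.span R {z : A ⊗[R] A |
      (∃ i ∈ I, ∃ h : A, z = i ⊗ₜ h) ∨ (∃ i ∈ I, ∃ h : A, z = h ⊗ₜ i)} := by
  set q := (I.ringCon.mkₐ R).toLinearMap
  have hq : Function.Surjective q := RingCon.mkₐ_surjective (α := R) _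
  have hker : ∀ i ∈ LinearMap.ker q, i ∈ I := fun i hi => by
    rw [← TwoSidedIdeal.ker_ringCon_mk' I, TwoSidedIdeal.mem_ker]
    exact hi
  have hx' : x ∈ LinearMap.ker (TensorProduct.map q q) := hx
  have hexact := LinearMap.exact_subtype_ker_map q
  rw [TensorProduct.map_ker hexact hq hexact hq, LinearMap.lTensor, LinearMap.rTensor,
    TensorProduct.range_map_eq_span_tmul, TensorProduct.range_map_eq_span_tmul,
    ← Submodule.span_union] at hx'
  refine Submodule.span_mono ?_ hx'
  rintro _ (⟨h, ⟨i, hi⟩, rfl⟩ | ⟨⟨i, hi⟩, h, rfl⟩)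
  · exact Or.inr ⟨i, hker i hi, h, rfl⟩
  · exact Or.inl ⟨i, hker i hi, h, rfl⟩

theorem commute_aH_gH (n : ℕ) : Commute (aH k n) (gH k n) := by
  simp only [aH, gH, Commute, SemiconjBy, ← map_mul]
  exact RingQuot.mkAlgHom_rel k (Or.inr (Or.inl ⟨rfl, rfl⟩))

theorem bH_mul_gH (n : ℕ) : bH k n * gH k n = gH k n * aH k n + gH k n * bH k n := by
  simp only [bH, gH, aH, ← map_mul, ← map_add]
  exact RingQuot.mkAlgHom_rel k (Or.inr (Or.inr ⟨rfl, rfl⟩))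

theorem lifting_ideal_is_biideal (p n : ℕ) [Fact p.Prime] (hp : 2 < p) [CharP k p]
    (lam mu : k)
    (Δ : H k n →ₐ[k] H k n ⊗[k] H k n)
    (hg : Δ (gH k n) = gH k n ⊗ₜ gH k n)
    (ha : Δ (aH k n) = aH k n ⊗ₜ 1 + gH k n ⊗ₜ aH k n)
    (hb : Δ (bH k n) = bH k n ⊗ₜ 1 + gH k n ⊗ₜ bH k n)
    (ε : H k n →ₐ[k] k)
    (heg : ε (gH k n) = 1) (hea : ε (aH k n) = 0) (heb : ε (bH k n) = 0) :
    ∀ x ∈ TwoSidedIdeal.span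
        ({(aH k n) ^ p - lam • (1 - (gH k n) ^ p),
          (bH k n) ^ p - mu • (1 - (gH k n) ^ p),
          bH k n * aH k n - aH k n * bH k n - ((2 : k)⁻¹) • (aH k n) ^ 2} :
          Set (H k n)),
      -- Δ(Ĩ) ⊆ Ĩ ⊗ H + H ⊗ Ĩ
      Δ x ∈ Submodule.span k
        {z : H k n ⊗[k] H k n |
          (∃ i ∈ TwoSidedIdeal.span
              ({(aH k n) ^ p - lam • (1 - (gH k n) ^ p),
                (bH k n) ^ p - mu • (1 - (gH k n) ^ p),
                bH k n * aH k n - aH k n * bH k n - ((2 : k)⁻¹) • (aH k n) ^ 2} :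
                Set (H k n)), ∃ h : H k n, z = i ⊗ₜ h) ∨
          (∃ i ∈ TwoSidedIdeal.span
              ({(aH k n) ^ p - lam • (1 - (gH k n) ^ p),
                (bH k n) ^ p - mu • (1 - (gH k n) ^ p),
                bH k n * aH k n - aH k n * bH k n - ((2 : k)⁻¹) • (aH k n) ^ 2} :
                Set (H k n)), ∃ h : H k n, z = h ⊗ₜ i)} ∧
      -- ε(Ĩ) = 0
      ε x = 0 := by
  intro x hx
  set q := (TwoSidedIdeal.span (liftingRelators p lam mu (gH k n) (aH k n) (bH k n))).ringCon.mkₐ k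
  set Δbar := (Algebra.TensorProduct.map q q).comp Δ
  have hΔbar : ∀ y ∈ liftingRelators p lam mu (Δbar (gH k n)) (Δbar (aH k n)) (Δbar (bH k n)),
      y = 0 := by
    simp only [Δbar, AlgHom.comp_apply, hg, ha, hb, map_add, Algebra.TensorProduct.map_tmul,
      map_one]
    refine liftingRelators_tmul_eq_zero p lam mu hp ((commute_aH_gH k n).map q) ?_
      (liftingRelators_mkₐ_eq_zero p lam mu TwoSidedIdeal.subset_span)
    rw [← map_mul, bH_mul_gH, map_add, map_mul, map_mul]
  have hε : ∀ y ∈ liftingRelators p lam mu (ε (gH k n)) (ε (aH k n)) (ε (bH k n)), y = 0 := by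
    simp [liftingRelators, heg, hea, heb, (Fact.out : p.Prime).ne_zero]
  exact ⟨mem_span_tmul_of_map_mkₐ_eq_zero _
      ((TwoSidedIdeal.mem_ker Δbar).1 (span_liftingRelators_le_ker p lam mu Δbar hΔbar hx)),
    (TwoSidedIdeal.mem_ker ε).1 (span_liftingRelators_le_ker p lam mu ε hε hx)⟩
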